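/- arXiv:2303.05173 — 6 statements merged into one kernel-verified Lean document; each statement's English description precedes it below -/
import Mathlib

section
/- Let d ≥ 1, n ≥ 1, and let v₀, v₁, …, v_{n−1} ∈ ℝ^d. Then the chain-form set { v_{n−1} + Σ_{i=0}^{n−2} (∏_{k=i}^{n−2} α_k) (v_i − v_{i+1}) : α ∈ [0,1]^{n−1} } is equal to the convex hull of {v₀, …, v_{n−1}}. -/
lemma Ici_eq_filter_fin {m : ℕ} (j : Fin m) :
    Finset.Ici j = Finset.univ.filter (fun k => j ≤ k) := by
  ext k; simp

lemma prod_Ici_castSucc {m : ℕ} (α : Fin (m + 1) → ℝ) (i : Fin m) :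
    ∏ k ∈ Finset.Ici i.castSucc, α k
      = α (Fin.last m) * ∏ k ∈ Finset.Ici i, α k.castSucc := by
  rw [Ici_eq_filter_fin, Finset.prod_filter, Fin.prod_univ_castSucc]
  rw [Ici_eq_filter_fin, Finset.prod_filter]
  simp [Fin.castSucc_le_castSucc_iff, Fin.le_last, mul_comm]

lemma prod_Ici_last {m : ℕ} (α : Fin (m + 1) → ℝ) :
    ∏ k ∈ Finset.Ici (Fin.last m), α k = α (Fin.last m) := by
  have : Finset.Ici (Fin.last m) = {Fin.last m} := by
    ext k; simp [Fin.last_le_iff, eq_comm]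
  rw [this, Finset.prod_singleton]

/-- **Theorem 3.2 (chain form of the M-representation).**
For `d ≥ 1`, `n = m + 1 ≥ 1` vertices `v₀, …, v_m ∈ ℝ^d`, the chain-form set
`{ v_m + Σ_{i=0}^{m-1} (∏_{k=i}^{m-1} α_k)(v_i − v_{i+1}) : α ∈ [0,1]^m }`
equals the convex hull of `{v₀, …, v_m}`. -/
theorem chain_form_eq_convexHull {d m : ℕ} (hd : 1 ≤ d)
    (v : Fin (m + 1) → (Fin d → ℝ)) :
    {x : Fin d → ℝ | ∃ α : Fin m → ℝ, (∀ k, α k ∈ Set.Icc (0 : ℝ) 1) ∧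
      x = v (Fin.last m) +
        ∑ i : Fin m, (∏ k ∈ Finset.Ici i, α k) • (v i.castSucc - v i.succ)} =
    convexHull ℝ (Set.range v) := by
  induction m with
  | zero =>
    have hr : Set.range v = {v 0} := by
      ext x; constructor
      · rintro ⟨i, rfl⟩; exact congrArg v (Fin.ext (Nat.lt_one_iff.mp i.isLt))
      · rintro rfl; exact ⟨0, rfl⟩
    rw [hr, convexHull_singleton]
    ext x
    simp only [Set.mem_setOf_eq, Set.mem_singleton_iff]
    constructor
    · rintro ⟨α, -, rfl⟩; simp [Fin.last]
    · rintro rfl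
      exact ⟨fun k => 0, fun k => k.elim0, by simp [Fin.last]⟩
  | succ m IH =>
    set v' : Fin (m + 1) → (Fin d → ℝ) := v ∘ Fin.castSucc with hv'
    have hrange : Set.range v = insert (v (Fin.last (m + 1))) (Set.range v') := by
      ext x
      simp only [Set.mem_range, Set.mem_insert_iff, hv', Function.comp]
      constructor
      · rintro ⟨i, rfl⟩
        refine Fin.lastCases ?_ ?_ i
        · left; rfl
        · intro j; right; exact ⟨j, rfl⟩
      · rintro (rfl | ⟨j, rfl⟩)
        · exact ⟨Fin.last _, rfl⟩
        · exact ⟨j.castSucc, rfl⟩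
    rw [hrange, convexHull_insert (Set.range_nonempty v'), ← IH v']
    -- key algebraic identity
    have key : ∀ α : Fin (m + 1) → ℝ,
        v (Fin.last (m + 1)) +
          ∑ i : Fin (m + 1), (∏ k ∈ Finset.Ici i, α k) • (v i.castSucc - v i.succ)
        = α (Fin.last m) • (v' (Fin.last m) +
            ∑ i : Fin m, (∏ k ∈ Finset.Ici i, α k.castSucc) • (v' i.castSucc - v' i.succ))
          + (1 - α (Fin.last m)) • v (Fin.last (m + 1)) := by
      intro α
      rw [Fin.sum_univ_castSucc]
      have h1 : ∀ i : Fin m,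
          (∏ k ∈ Finset.Ici i.castSucc, α k) • (v i.castSucc.castSucc - v i.castSucc.succ)
          = α (Fin.last m) • ((∏ k ∈ Finset.Ici i, α k.castSucc) •
              (v' i.castSucc - v' i.succ)) := by
        intro i
        rw [prod_Ici_castSucc, mul_smul]
        congr 2 <;> simp [hv', Function.comp, Fin.succ_castSucc]
      rw [Finset.sum_congr rfl (fun i _ => h1 i), ← Finset.smul_sum, prod_Ici_last]
      simp only [Fin.succ_last, hv', Function.comp]
      rw [smul_add, sub_smul, one_smul, smul_sub]
      abel
    ext x
    simp only [Set.mem_setOf_eq, mem_convexJoin, Set.mem_singleton_iff, exists_eq_left]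
    constructor
    · rintro ⟨α, hα, rfl⟩
      refine ⟨v' (Fin.last m) + ∑ i : Fin m,
          (∏ k ∈ Finset.Ici i, α k.castSucc) • (v' i.castSucc - v' i.succ),
        ⟨fun k => α k.castSucc, fun k => hα _, rfl⟩, ?_⟩
      refine ⟨1 - α (Fin.last m), α (Fin.last m),
        by linarith [(hα (Fin.last m)).2], (hα (Fin.last m)).1, by ring, ?_⟩
      rw [key α]; abel
    · rintro ⟨y, ⟨α', hα', rfl⟩, b, c, hb, hc, hbc, rfl⟩
      refine ⟨Fin.snoc α' c, ?_, ?_⟩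
      · intro k
        refine Fin.lastCases ?_ ?_ k
        · simp only [Fin.snoc_last]; exact ⟨hc, by linarith⟩
        · intro j; simp only [Fin.snoc_castSucc]; exact hα' j
      · rw [key (Fin.snoc α' c)]
        simp only [Fin.snoc_last, Fin.snoc_castSucc]
        have hb' : b = 1 - c := by linarith
        rw [hb']; abel
end

section
/- For every m ≥ 0, the image of the cube [0,1]^m under the map α ↦ (β₀, …, β_{m−1}) defined by β_i = ∏_{k=i}^{m−1} α_k equals the set { β ∈ ℝ^m : 0 ≤ β₀ ≤ β₁ ≤ ⋯ ≤ β_{m−1} ≤ 1 } of monotone nondecreasing vectors in [0,1]^m. -/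
/-!
Suffix products of numbers in `[0,1]` lie in `[0,1]` and can only shrink as the index decreases,
since more factors `≤ 1` come in. Conversely, a monotone `β` with values in `[0,1]`, extended by
`β_m = 1`, is the suffix-product vector of the ratios `α_k = β_k / β_{k+1}`, by telescoping.
Where `β_{k+1} = 0`, monotonicity forces `β_k = 0`, so Lean's `0 / 0 = 0` is the right choice
of `α_k`.
-/

open Finset

theorem prod_Ico_div_succ_mul_of_imp {G₀ : Type*} [CommGroupWithZero G₀] (g : ℕ → G₀)
    (hg : ∀ k, g (k + 1) = 0 → g k = 0) {i n : ℕ} (hin : i ≤ n) :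
    (∏ k ∈ Ico i n, g k / g (k + 1)) * g n = g i := by
  induction n, hin using Nat.le_induction with
  | base => simp
  | succ n hin ih => rw [prod_Ico_succ_top hin, mul_assoc, div_mul_cancel_of_imp (hg n), ih]

theorem Fin.prod_Ici_val_eq_prod_Ico {M : Type*} [CommMonoid M] {m : ℕ} (f : ℕ → M)
    (i : Fin m) : ∏ k ∈ Ici i, f k = ∏ j ∈ Ico (i : ℕ) m, f j := by
  rw [← Fin.map_valEmbedding_Ici, prod_map]
  rfl

section UnitInterval

variable {ι R : Type*} [CommSemiring R] [PartialOrder R] [IsOrderedRing R] {α : ι → R}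

theorem prod_mem_Icc_zero_one (s : Finset ι) (hα : ∀ k ∈ s, α k ∈ Set.Icc 0 1) :
    ∏ k ∈ s, α k ∈ Set.Icc 0 1 :=
  ⟨prod_nonneg fun k hk => (hα k hk).1,
    prod_le_one (fun k hk => (hα k hk).1) fun k hk => (hα k hk).2⟩

theorem monotone_prod_Ici_of_mem_Icc [Preorder ι] [LocallyFiniteOrderTop ι]
    (hα : ∀ k, α k ∈ Set.Icc 0 1) : Monotone fun i => ∏ k ∈ Ici i, α k :=
  fun _ _ hij =>
    prod_anti_set_of_le_one (fun k => (hα k).1) (fun k => (hα k).2) (Ici_subset_Ici.2 hij)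

end UnitInterval

theorem monotone_dite_lt_else_one {K : Type*} [Preorder K] [One K] {m : ℕ} {β : Fin m → K}
    (hβ : Monotone β) (hβ1 : ∀ i, β i ≤ 1) :
    Monotone fun j : ℕ => if h : j < m then β ⟨j, h⟩ else 1 := by
  refine monotone_nat_of_le_succ fun j => ?_
  by_cases h : j + 1 < m
  · simp only [h, j.lt_succ_self.trans h, dite_true]
    exact hβ j.le_succ
  · split_ifs <;> simp [hβ1]

section Ratios

variable {K : Type*} [Field K] [LinearOrder K]

theorem div_succ_mem_Icc_of_monotone [IsStrictOrderedRing K] {g : ℕ → K} (hg : Monotone g)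
    (hg0 : ∀ k, 0 ≤ g k) (k : ℕ) : g k / g (k + 1) ∈ Set.Icc 0 1 :=
  ⟨div_nonneg (hg0 k) (hg0 _), div_le_one_of_le₀ (hg k.le_succ) (hg0 _)⟩

theorem prod_Ico_div_succ_of_monotone {g : ℕ → K} (hg : Monotone g) (hg0 : ∀ k, 0 ≤ g k)
    {i n : ℕ} (hin : i ≤ n) (hn : g n = 1) : ∏ k ∈ Ico i n, g k / g (k + 1) = g i := by
  have hzero (k : ℕ) (hk : g (k + 1) = 0) : g k = 0 := (hk ▸ hg k.le_succ).antisymm (hg0 k)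
  simpa [hn] using prod_Ico_div_succ_mul_of_imp g hzero hin

theorem exists_prod_Ici_eq_of_monotone [IsStrictOrderedRing K] {m : ℕ} {β : Fin m → K}
    (hβ : Monotone β) (hβ01 : ∀ i, β i ∈ Set.Icc 0 1) :
    ∃ α : Fin m → K, (∀ k, α k ∈ Set.Icc 0 1) ∧ ∀ i, ∏ k ∈ Ici i, α k = β i := by
  set g : ℕ → K := fun j => if h : j < m then β ⟨j, h⟩ else 1
  have hg : Monotone g := monotone_dite_lt_else_one hβ fun i => (hβ01 i).2
  have hg0 (j : ℕ) : 0 ≤ g j := by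
    simp only [g]
    split_ifs
    exacts [(hβ01 _).1, zero_le_one]
  refine ⟨fun k => g k / g (k + 1), fun k => div_succ_mem_Icc_of_monotone hg hg0 k, fun i => ?_⟩
  rw [Fin.prod_Ici_val_eq_prod_Ico (fun j => g j / g (j + 1)),
    prod_Ico_div_succ_of_monotone hg hg0 i.is_lt.le (by simp [g])]
  simp [g]

end Ratios

/-- The image of the cube `[0,1]^m` under the suffix-product map
`α ↦ β` with `β i = ∏_{k=i}^{m-1} α_k` equals the set of monotone
nondecreasing vectors `0 ≤ β₀ ≤ β₁ ≤ ⋯ ≤ β_{m−1} ≤ 1` in `[0,1]^m`. -/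
theorem suffix_prod_image_cube (m : ℕ) :
    (fun α : Fin m → ℝ => fun i : Fin m => ∏ k ∈ Finset.Ici i, α k) ''
      {α : Fin m → ℝ | ∀ k, α k ∈ Set.Icc (0 : ℝ) 1} =
    {β : Fin m → ℝ | Monotone β ∧ ∀ i, β i ∈ Set.Icc (0 : ℝ) 1} := by
  ext β
  constructor
  · rintro ⟨α, hα, rfl⟩
    exact ⟨monotone_prod_Ici_of_mem_Icc hα, fun i => prod_mem_Icc_zero_one _ fun k _ => hα k⟩
  · rintro ⟨hβ, hβ01⟩
    obtain ⟨α, hα, hαβ⟩ := exists_prod_Ici_eq_of_monotone hβ hβ01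
    exact ⟨α, hα, funext hαβ⟩
end

section
/- Let n ≥ 1 and v₀, …, v_{n−1} ∈ ℝ^d. Then the convex hull of {v₀, …, v_{n−1}} equals the set { v_{n−1} + Σ_{i=0}^{n−2} β_i (v_i − v_{i+1}) : β ∈ ℝ^{n−1}, 0 ≤ β₀ ≤ β₁ ≤ ⋯ ≤ β_{n−2} ≤ 1 }. -/
lemma key_identity' {E : Type*} [AddCommGroup E] [Module ℝ E] :
    ∀ {m : ℕ} (v : Fin (m + 1) → E) (B : ℕ → ℝ),
    ∑ j : Fin (m + 1), (B (j.val + 1) - B j.val) • v j =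
      B (m + 1) • v (Fin.last m) - B 0 • v 0 +
        ∑ i : Fin m, B (i.val + 1) • (v i.castSucc - v i.succ) := by
  intro m
  induction m with
  | zero =>
    intro v B
    simp [Fin.last]
    module
  | succ m ih =>
    intro v B
    rw [Fin.sum_univ_castSucc (f := fun j : Fin (m+2) => (B (j.val+1) - B j.val) • v j),
        Fin.sum_univ_castSucc (f := fun i : Fin (m+1) => B (i.val+1) • (v i.castSucc - v i.succ))]
    have h := ih (fun j => v j.castSucc) B
    simp only [Fin.coe_castSucc, Fin.succ_castSucc] at h ⊢
    rw [h]
    have h2 : Fin.castSucc (0 : Fin (m+1)) = (0 : Fin (m+2)) := by simp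
    rw [h2]
    rw [Fin.succ_last m]
    simp only [Fin.val_last]
    module

/-- The convex hull of `{v₀, …, v_m}` (so `n = m + 1 ≥ 1` vertices) equals
`{ v_m + Σ_{i=0}^{m-1} β_i (v_i − v_{i+1}) : 0 ≤ β₀ ≤ β₁ ≤ ⋯ ≤ β_{m−1} ≤ 1 }`. -/
theorem convexHull_eq_monotone_param {d m : ℕ} (v : Fin (m + 1) → (Fin d → ℝ)) :
    convexHull ℝ (Set.range v) =
    {x : Fin d → ℝ | ∃ β : Fin m → ℝ, Monotone β ∧ (∀ i, β i ∈ Set.Icc (0 : ℝ) 1) ∧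
      x = v (Fin.last m) + ∑ i : Fin m, β i • (v i.castSucc - v i.succ)} := by
  ext x
  constructor
  · -- forward: hull ⊆ parametrized set
    intro hx
    rw [convexHull_range_eq_exists_affineCombination] at hx
    obtain ⟨s, w, hw0, hw1, hxw⟩ := hx
    set W : Fin (m + 1) → ℝ := fun i => if i ∈ s then w i else 0 with hW
    have hW0 : ∀ i, 0 ≤ W i := by
      intro i; simp only [hW]
      split
      · exact hw0 _ ‹_›
      · exact le_rfl
    have hWsum : ∑ i, W i = 1 := by
      rw [hW]
      simp only
      rw [Finset.sum_ite_mem, Finset.univ_inter]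
      exact hw1
    have hxW : ∑ i, W i • v i = x := by
      rw [← hxw, affineCombination_eq_centerMass hw1, Finset.centerMass_eq_of_sum_1 _ _ hw1]
      rw [hW]
      simp only [ite_smul, zero_smul]
      rw [Finset.sum_ite_mem, Finset.univ_inter]
    -- partial sums
    set w' : ℕ → ℝ := fun k => if h : k < m + 1 then W ⟨k, h⟩ else 0 with hw'
    set B : ℕ → ℝ := fun k => ∑ j ∈ Finset.range k, w' j with hB
    have hw'0 : ∀ k, 0 ≤ w' k := by
      intro k; rw [hw']; dsimp only
      split
      · exact hW0 _
      · exact le_rfl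
    have hBmono : Monotone B := by
      intro a b hab
      exact Finset.sum_le_sum_of_subset_of_nonneg (Finset.range_subset_range.2 hab)
        (fun i _ _ => hw'0 i)
    have hBtop : B (m + 1) = 1 := by
      rw [hB]
      dsimp only
      rw [← Fin.sum_univ_eq_sum_range w' (m+1), ← hWsum]
      apply Finset.sum_congr rfl
      intro i _
      rw [hw']
      simp [Fin.is_lt i]
    refine ⟨fun i => B (i.val + 1), ?_, ?_, ?_⟩
    · intro a b hab
      exact hBmono (by omega)
    · intro i
      constructor
      · have : B 0 = 0 := by simp [hB]
        rw [← this]; exact hBmono (by omega)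
      · rw [← hBtop]; exact hBmono (by omega)
    · have hkey := key_identity' v B
      have hstep : ∀ j : Fin (m + 1), B (j.val + 1) - B j.val = W j := by
        intro j
        rw [hB]
        dsimp only
        rw [Finset.sum_range_succ]
        simp only [add_sub_cancel_left]
        rw [hw']
        simp [Fin.is_lt j]
      rw [Finset.sum_congr rfl (fun j _ => by rw [hstep j])] at hkey
      rw [hxW] at hkey
      rw [hkey, hBtop]
      have : B 0 = 0 := by simp [hB]
      rw [this]
      simp
  · -- backward: parametrized set ⊆ hull
    rintro ⟨β, hmono, hIcc, rfl⟩
    set B : ℕ → ℝ := fun k => match k with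
      | 0 => 0
      | k + 1 => if h : k < m then β ⟨k, h⟩ else 1 with hB
    set W : Fin (m + 1) → ℝ := fun j => B (j.val + 1) - B j.val with hW
    have hW0 : ∀ j, 0 ≤ W j := by
      intro j
      rw [hW]
      dsimp only
      rcases j with ⟨jv, hjv⟩
      match jv, hjv with
      | 0, _ =>
        simp only [hB]
        split
        · exact sub_nonneg.2 (by simpa using (hIcc _).1)
        · norm_num
      | (k+1), hk =>
        simp only [hB]
        have hkm : k < m := by omega
        rw [dif_pos hkm]
        split
        · rename_i h
          exact sub_nonneg.2 (hmono (by simp [Fin.le_def]))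
        · exact sub_nonneg.2 (hIcc _).2
    have hWsum : ∑ j, W j = 1 := by
      rw [hW]
      dsimp only
      rw [Fin.sum_univ_eq_sum_range (fun k => B (k+1) - B k) (m+1)]
      rw [Finset.sum_range_sub B (m+1)]
      simp [hB]
    apply mem_convexHull_of_exists_fintype W v hW0 hWsum (fun i => Set.mem_range_self i)
    have hkey := key_identity' v B
    rw [hW]
    dsimp only
    rw [hkey]
    have h0 : B 0 = 0 := rfl
    have htop : B (m + 1) = 1 := by simp [hB]
    rw [h0, htop]
    have : ∀ i : Fin m, B (i.val + 1) = β i := by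
      intro i
      simp [hB, Fin.is_lt i]
    rw [Finset.sum_congr rfl (fun i _ => by rw [this i])]
    simp
end

section
/- Let c, g₁, …, g_m ∈ ℝ^d, and let P = { c + Σ_{i=1}^{m} (∏_{k=i}^{m} α_k) g_i : α ∈ [−1,1]^m } be the Z-representation set with lower-triangular exponent matrix. Then P is point symmetric with respect to c: for every x ∈ ℝ^d, x ∈ P if and only if 2c − x ∈ P. -/
private lemma zrep_chain_aux {d m : ℕ} (c : Fin d → ℝ)
    (g : Fin m → (Fin d → ℝ)) :
    ∀ x : Fin d → ℝ,
      x ∈ {y : Fin d → ℝ | ∃ α : Fin m → ℝ, (∀ k, α k ∈ Set.Icc (-1 : ℝ) 1) ∧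
          y = c + ∑ i : Fin m, (∏ k ∈ Finset.Ici i, α k) • g i} →
      (2 : ℝ) • c - x ∈ {y : Fin d → ℝ | ∃ α : Fin m → ℝ,
          (∀ k, α k ∈ Set.Icc (-1 : ℝ) 1) ∧
          y = c + ∑ i : Fin m, (∏ k ∈ Finset.Ici i, α k) • g i} := by
  rintro x ⟨α, hα, rfl⟩
  cases m with
  | zero =>
      refine ⟨α, hα, ?_⟩
      simp [two_smul]
  | succ n =>
      refine ⟨Function.update α (Fin.last n) (-(α (Fin.last n))), ?_, ?_⟩
      · intro k
        rcases eq_or_ne k (Fin.last n) with rfl | hk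
        · have h := hα (Fin.last n)
          simp only [Set.mem_Icc, Function.update_self] at h ⊢
          constructor <;> linarith [h.1, h.2]
        · simpa [Function.update_of_ne hk] using hα k
      · have key : ∀ i : Fin (n+1),
            (∏ k ∈ Finset.Ici i, Function.update α (Fin.last n) (-(α (Fin.last n))) k)
              = -(∏ k ∈ Finset.Ici i, α k) := by
          intro i
          have hmem : Fin.last n ∈ Finset.Ici i := Finset.mem_Ici.mpr (Fin.le_last i)
          rw [Finset.prod_update_of_mem hmem, ← Finset.mul_prod_erase _ α hmem]
          rw [Finset.erase_eq]
          ring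
        simp only [key]
        simp [two_smul, neg_smul, Finset.sum_neg_distrib]
        abel

/-- **Corollary 3.3.** A Z-representation set with lower-triangular exponent matrix,
`P = { c + Σ_{i=1}^m (∏_{k=i}^m α_k) g_i : α ∈ [−1,1]^m }`,
is point symmetric with respect to `c`: `x ∈ P ↔ 2c − x ∈ P`. -/
theorem zrep_chain_point_symmetric {d m : ℕ} (c : Fin d → ℝ)
    (g : Fin m → (Fin d → ℝ)) :
    ∀ x : Fin d → ℝ,
      x ∈ {y : Fin d → ℝ | ∃ α : Fin m → ℝ, (∀ k, α k ∈ Set.Icc (-1 : ℝ) 1) ∧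
          y = c + ∑ i : Fin m, (∏ k ∈ Finset.Ici i, α k) • g i} ↔
      (2 : ℝ) • c - x ∈ {y : Fin d → ℝ | ∃ α : Fin m → ℝ,
          (∀ k, α k ∈ Set.Icc (-1 : ℝ) 1) ∧
          y = c + ∑ i : Fin m, (∏ k ∈ Finset.Ici i, α k) • g i} := by
  intro x
  constructor
  · exact zrep_chain_aux c g x
  · intro h
    have := zrep_chain_aux c g _ h
    have hx : (2:ℝ) • c - ((2:ℝ) • c - x) = x := by abel
    rwa [hx] at this
end

section
/- Let P₁ = { s₁ + Σ_{i=1}^{h₁} (∏_{k ∈ S₁(i)} γ_k) B_i : γ ∈ [0,1]^{p₁} } and P₂ = { s₂ + Σ_{j=1}^{h₂} (∏_{k ∈ S₂(j)} β_k) C_j : β ∈ [0,1]^{p₂} } be two M-representation sets in ℝ^d. Then the convex join { λ p₁ + (1−λ) p₂ : p₁ ∈ P₁, p₂ ∈ P₂, λ ∈ [0,1] } equals the set { s₂ + Σ_{j=1}^{h₂} (∏_{k ∈ S₂(j)} β_k) C_j − λ · Σ_{j=1}^{h₂} (∏_{k ∈ S₂(j)} β_k) C_j + λ · Σ_{i=1}^{h₁}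 (∏_{k ∈ S₁(i)} γ_k) B_i + λ (s₁ − s₂) : β ∈ [0,1]^{p₂}, γ ∈ [0,1]^{p₁}, λ ∈ [0,1] }, which is again an M-representation set with basis vectors [C₁, …, C_{h₂}, −C₁, …, −C_{h₂}, B₁, …, B_{h₁}, s₁ − s₂] and h₁ + 2h₂ + 1 basis vectors. -/
/-- **Proposition 4.2 (convex hull of two M-representations).** The convex join
`{ λ p₁ + (1−λ) p₂ : p₁ ∈ P₁, p₂ ∈ P₂, λ ∈ [0,1] }` of the M-representation sets
`P₁ = { s₁ + Σ_i (∏_{k ∈ S₁(i)} γ_k) B_i : γ ∈ [0,1]^{p₁} }` and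
`P₂ = { s₂ + Σ_j (∏_{k ∈ S₂(j)} β_k) C_j : β ∈ [0,1]^{p₂} }` equals the
M-representation set with starting point `s₂` and the `h₁ + 2h₂ + 1` basis
vectors `[C, −C, B, s₁ − s₂]`. -/
theorem mrep_convex_join {d p₁ p₂ h₁ h₂ : ℕ} (s₁ s₂ : Fin d → ℝ)
    (B : Fin h₁ → (Fin d → ℝ)) (C : Fin h₂ → (Fin d → ℝ))
    (S₁ : Fin h₁ → Finset (Fin p₁)) (S₂ : Fin h₂ → Finset (Fin p₂)) :
    {x : Fin d → ℝ |
        ∃ p ∈ {y : Fin d → ℝ | ∃ γ : Fin p₁ → ℝ, (∀ k, γ k ∈ Set.Icc (0 : ℝ) 1) ∧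
            y = s₁ + ∑ i : Fin h₁, (∏ k ∈ S₁ i, γ k) • B i},
        ∃ q ∈ {y : Fin d → ℝ | ∃ β : Fin p₂ → ℝ, (∀ k, β k ∈ Set.Icc (0 : ℝ) 1) ∧
            y = s₂ + ∑ j : Fin h₂, (∏ k ∈ S₂ j, β k) • C j},
        ∃ l ∈ Set.Icc (0 : ℝ) 1, x = l • p + (1 - l) • q} =
    {x : Fin d → ℝ | ∃ β : Fin p₂ → ℝ, ∃ γ : Fin p₁ → ℝ, ∃ l : ℝ,
        (∀ k, β k ∈ Set.Icc (0 : ℝ) 1) ∧ (∀ k, γ k ∈ Set.Icc (0 : ℝ) 1) ∧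
        l ∈ Set.Icc (0 : ℝ) 1 ∧
        x = s₂ + ∑ j : Fin h₂, (∏ k ∈ S₂ j, β k) • C j
          - l • (∑ j : Fin h₂, (∏ k ∈ S₂ j, β k) • C j)
          + l • (∑ i : Fin h₁, (∏ k ∈ S₁ i, γ k) • B i)
          + l • (s₁ - s₂)} := by
  ext x
  constructor
  · rintro ⟨p, ⟨γ, hγ, rfl⟩, q, ⟨β, hβ, rfl⟩, l, hl, rfl⟩
    exact ⟨β, γ, l, hβ, hγ, hl, by module⟩
  · rintro ⟨β, γ, l, hβ, hγ, hl, rfl⟩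
    exact ⟨_, ⟨γ, hγ, rfl⟩, _, ⟨β, hβ, rfl⟩, l, hl, by module⟩
end

section
/- Let P₁ = { c₁ + Σ_{i=1}^{h₁} (∏_{k ∈ S₁(i)} γ_k) G_i : γ ∈ [−1,1]^{p₁} } and P₂ = { c₂ + Σ_{j=1}^{h₂} (∏_{k ∈ S₂(j)} β_k) H_j : β ∈ [−1,1]^{p₂} } be two sets in Z-representation in ℝ^d. Then the convex join { λ p₁ + (1−λ) p₂ : p₁ ∈ P₁, p₂ ∈ P₂, λ ∈ [0,1] } equals the set { ½(c₁ + c₂) + ½ μ (c₁ − c₂) + ½ Σ_{i=1}^{h₁} (∏_{k ∈ S₁(i)} γ_k) G_i + ½ μ Σ_{i=1}^{h₁} (∏_{k ∈ S₁(i)} γ_k) G_i + ½ Σ_{j=1}^{h₂} (∏_{k ∈ S₂(j)} β_k) H_j − ½ μ Σ_{j=1}^{h₂} (∏_{k ∈ S₂(j)} β_k) H_j : γ ∈ [−1,1]^{p₁}, β ∈ [−1,1]^{p₂}, μ ∈ [−1,1] }. -/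
/-- **Proposition 2.6 (convex hull of Z-representations).** The convex join
`{ λ p₁ + (1−λ) p₂ : p₁ ∈ P₁, p₂ ∈ P₂, λ ∈ [0,1] }` of the Z-representation sets
`P₁ = { c₁ + Σ_i (∏_{k ∈ S₁(i)} γ_k) G_i : γ ∈ [−1,1]^{p₁} }` and
`P₂ = { c₂ + Σ_j (∏_{k ∈ S₂(j)} β_k) H_j : β ∈ [−1,1]^{p₂} }` equals the
Z-representation set with center `½(c₁ + c₂)`, generators
`½[(c₁ − c₂), G, G, H, −H]`, and one additional factor `μ ∈ [−1,1]`. -/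
theorem zrep_convex_join {d p₁ p₂ h₁ h₂ : ℕ} (c₁ c₂ : Fin d → ℝ)
    (G : Fin h₁ → (Fin d → ℝ)) (H : Fin h₂ → (Fin d → ℝ))
    (S₁ : Fin h₁ → Finset (Fin p₁)) (S₂ : Fin h₂ → Finset (Fin p₂)) :
    {x : Fin d → ℝ |
        ∃ p ∈ {y : Fin d → ℝ | ∃ γ : Fin p₁ → ℝ, (∀ k, γ k ∈ Set.Icc (-1 : ℝ) 1) ∧
            y = c₁ + ∑ i : Fin h₁, (∏ k ∈ S₁ i, γ k) • G i},
        ∃ q ∈ {y : Fin d → ℝ | ∃ β : Fin p₂ → ℝ, (∀ k, β k ∈ Set.Icc (-1 : ℝ) 1) ∧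
            y = c₂ + ∑ j : Fin h₂, (∏ k ∈ S₂ j, β k) • H j},
        ∃ l ∈ Set.Icc (0 : ℝ) 1, x = l • p + (1 - l) • q} =
    {x : Fin d → ℝ | ∃ γ : Fin p₁ → ℝ, ∃ β : Fin p₂ → ℝ, ∃ μ : ℝ,
        (∀ k, γ k ∈ Set.Icc (-1 : ℝ) 1) ∧ (∀ k, β k ∈ Set.Icc (-1 : ℝ) 1) ∧
        μ ∈ Set.Icc (-1 : ℝ) 1 ∧
        x = (1 / 2 : ℝ) • (c₁ + c₂) + ((1 / 2 : ℝ) * μ) • (c₁ - c₂)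
          + (1 / 2 : ℝ) • (∑ i : Fin h₁, (∏ k ∈ S₁ i, γ k) • G i)
          + ((1 / 2 : ℝ) * μ) • (∑ i : Fin h₁, (∏ k ∈ S₁ i, γ k) • G i)
          + (1 / 2 : ℝ) • (∑ j : Fin h₂, (∏ k ∈ S₂ j, β k) • H j)
          - ((1 / 2 : ℝ) * μ) • (∑ j : Fin h₂, (∏ k ∈ S₂ j, β k) • H j)} := by
  ext x
  simp only [Set.mem_setOf_eq, Set.mem_Icc]
  constructor
  · rintro ⟨p, ⟨γ, hγ, rfl⟩, q, ⟨β, hβ, rfl⟩, l, ⟨hl0, hl1⟩, rfl⟩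
    refine ⟨γ, β, 2 * l - 1, hγ, hβ, ⟨by linarith, by linarith⟩, ?_⟩
    module
  · rintro ⟨γ, β, μ, hγ, hβ, ⟨hμ0, hμ1⟩, rfl⟩
    refine ⟨_, ⟨γ, hγ, rfl⟩, _, ⟨β, hβ, rfl⟩, (1 + μ) / 2,
      ⟨by linarith, by linarith⟩, ?_⟩
    module
end
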